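/- Every automorphism of H^∞_0(𝔻) preserves inner functions: if T : H^∞_0(𝔻) → H^∞_0(𝔻) is an automorphism and φ ∈ H^∞_0(𝔻) is an inner function, then Tφ is an inner function. -/

import Mathlib

open Set Metric Complex MeasureTheory Filter

noncomputable section

/-- The open unit disc in `ℂ`. -/
def D : Set ℂ := Metric.ball (0 : ℂ) 1

/-- `H^∞(𝔻)`: bounded analytic functions on the open unit disc.  Functions are represented by
their values on `ℂ`; only the values on `D` are relevant, and two representatives are
identified when they agree on `D`. -/
def Hinf : Set (ℂ → ℂ) :=
  {f | DifferentiableOn ℂ f D ∧ ∃ C : ℝ, ∀ z ∈ D, ‖f z‖ ≤ C}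

/-- `H^∞_0(𝔻) = {f ∈ H^∞(𝔻) : f 0 = 0}`. -/
def Hinf0 : Set (ℂ → ℂ) := {f | f ∈ Hinf ∧ f 0 = 0}

/-- The Neil algebra `H^∞_1(𝔻) = {f ∈ H^∞(𝔻) : f'(0) = 0}`. -/
def Hinf1 : Set (ℂ → ℂ) := {f | f ∈ Hinf ∧ deriv f 0 = 0}

/-- `T` is an automorphism (bijective ℂ-linear multiplicative map) of the algebra of
holomorphic functions `A`, where two functions are identified when they agree on `D`. -/
def IsAlgAutOn (A : Set (ℂ → ℂ)) (T : (ℂ → ℂ) → (ℂ → ℂ)) : Prop :=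
  (∀ f ∈ A, T f ∈ A) ∧
  (∀ f ∈ A, ∀ g ∈ A, Set.EqOn f g D → Set.EqOn (T f) (T g) D) ∧
  (∀ f ∈ A, ∀ g ∈ A, Set.EqOn (T (f + g)) (T f + T g) D) ∧
  (∀ (c : ℂ), ∀ f ∈ A, Set.EqOn (T (c • f)) (c • T f) D) ∧
  (∀ f ∈ A, ∀ g ∈ A, Set.EqOn (T (f * g)) (T f * T g) D) ∧
  (∀ f ∈ A, ∀ g ∈ A, Set.EqOn (T f) (T g) D → Set.EqOn f g D) ∧
  (∀ g ∈ A, ∃ f ∈ A, Set.EqOn (T f) g D)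

/-- A function in `H^∞(𝔻)` is inner if its radial boundary values have modulus one at almost
every boundary point. -/
def IsInner (φ : ℂ → ℂ) : Prop :=
  φ ∈ Hinf ∧ ∀ᵐ (θ : ℝ) ∂(volume : Measure ℝ),
    Filter.Tendsto (fun r : ℝ => ‖φ ((r : ℂ) * Complex.exp ((θ : ℂ) * Complex.I))‖)
      (nhdsWithin 1 (Set.Iio 1)) (nhds 1)

/-- A conformal automorphism of the unit disc: a bijective holomorphic self-map of `D`. -/
def IsConfAut (τ : ℂ → ℂ) : Prop := DifferentiableOn ℂ τ D ∧ Set.BijOn τ D D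


section AuxiliaryLemmas
open Topology

lemma D_open : IsOpen D := isOpen_ball
lemma zero_mem_D : (0:ℂ) ∈ D := by simp [D]
lemma D_conn : IsPreconnected D := (convex_ball (0:ℂ) 1).isPreconnected
lemma mem_D_iff {z : ℂ} : z ∈ D ↔ ‖z‖ < 1 := by
  simp [D, mem_ball, Complex.dist_eq]

lemma Hinf_add {f g : ℂ → ℂ} (hf : f ∈ Hinf) (hg : g ∈ Hinf) : f + g ∈ Hinf := by
  obtain ⟨hfd, Cf, hCf⟩ := hf
  obtain ⟨hgd, Cg, hCg⟩ := hg
  refine ⟨hfd.add hgd, Cf + Cg, fun z hz => ?_⟩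
  calc ‖f z + g z‖ ≤ ‖f z‖ + ‖g z‖ := by
        exact norm_add_le _ _
    _ ≤ Cf + Cg := add_le_add (hCf z hz) (hCg z hz)

lemma Hinf_smul (c : ℂ) {f : ℂ → ℂ} (hf : f ∈ Hinf) : c • f ∈ Hinf := by
  obtain ⟨hfd, Cf, hCf⟩ := hf
  refine ⟨hfd.const_smul c, ‖c‖ * Cf, fun z hz => ?_⟩
  simp only [Pi.smul_apply, smul_eq_mul, norm_mul]
  exact mul_le_mul_of_nonneg_left (hCf z hz) (norm_nonneg c)

lemma Hinf_mul {f g : ℂ → ℂ} (hf : f ∈ Hinf) (hg : g ∈ Hinf) : f * g ∈ Hinf := by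
  obtain ⟨hfd, Cf, hCf⟩ := hf
  obtain ⟨hgd, Cg, hCg⟩ := hg
  have hCf0 : 0 ≤ Cf := le_trans (norm_nonneg _) (hCf 0 zero_mem_D)
  refine ⟨hfd.mul hgd, Cf * Cg, fun z hz => ?_⟩
  simp only [Pi.mul_apply, norm_mul]
  exact mul_le_mul (hCf z hz) (hCg z hz) (norm_nonneg _) hCf0

lemma Hinf0_add {f g : ℂ → ℂ} (hf : f ∈ Hinf0) (hg : g ∈ Hinf0) : f + g ∈ Hinf0 :=
  ⟨Hinf_add hf.1 hg.1, by simp [hf.2, hg.2]⟩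

lemma Hinf0_smul (c : ℂ) {f : ℂ → ℂ} (hf : f ∈ Hinf0) : c • f ∈ Hinf0 :=
  ⟨Hinf_smul c hf.1, by simp [hf.2]⟩

lemma Hinf0_mul {f g : ℂ → ℂ} (hf : f ∈ Hinf0) (hg : g ∈ Hinf) : f * g ∈ Hinf0 :=
  ⟨Hinf_mul hf.1 hg, by simp [hf.2]⟩

lemma Hinf0_mul' {f g : ℂ → ℂ} (hf : f ∈ Hinf) (hg : g ∈ Hinf0) : f * g ∈ Hinf0 :=
  ⟨Hinf_mul hf hg.1, by simp [hg.2]⟩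

lemma e_mem : (fun z : ℂ => z) ∈ Hinf0 := by
  refine ⟨⟨differentiableOn_id, 1, fun z hz => ?_⟩, rfl⟩
  exact le_of_lt (mem_D_iff.1 hz)

lemma zero_mem : (0 : ℂ → ℂ) ∈ Hinf0 := by
  refine ⟨⟨differentiableOn_const 0, 0, fun z hz => by simp⟩, rfl⟩

/-- dslope of a bounded analytic function at an interior point is bounded analytic. -/
lemma dslope_mem_Hinf {f : ℂ → ℂ} {a : ℂ} (hf : f ∈ Hinf) (ha : a ∈ D) :
    dslope f a ∈ Hinf := by
  obtain ⟨hfd, C, hC⟩ := hf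
  have hD : D ∈ 𝓝 a := D_open.mem_nhds ha
  have hd : DifferentiableOn ℂ (dslope f a) D :=
    (Complex.differentiableOn_dslope hD).2 hfd
  -- bound
  set r : ℝ := (1 - ‖a‖) / 2 with hr
  have hr0 : 0 < r := by
    have := mem_D_iff.1 ha; linarith
  have hball : closedBall a r ⊆ D := by
    intro z hz
    rw [mem_closedBall, Complex.dist_eq] at hz
    rw [mem_D_iff]
    calc ‖z‖ = ‖z - a + a‖ := by ring_nf
      _ ≤ ‖z - a‖ + ‖a‖ := norm_add_le _ _
      _ ≤ r + ‖a‖ := by linarith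
      _ < 1 := by rw [hr]; linarith [ (norm_nonneg a)]
  have hcont : ContinuousOn (dslope f a) (closedBall a r) :=
    (hd.continuousOn).mono hball
  obtain ⟨M, hM⟩ := (isCompact_closedBall a r).exists_bound_of_continuousOn hcont
  refine ⟨hd, max M (2 * C / r), fun z hz => ?_⟩
  by_cases hza : z ∈ closedBall a r
  · exact le_max_of_le_left (by simpa using hM z hza)
  · have hne : z ≠ a := by
      intro h; exact hza (by simp [h, hr0.le])
    have hzar : r < ‖z - a‖ := by
      by_contra h
      push_neg at h
      refine hza ?_
      rw [mem_closedBall, Complex.dist_eq]; linarith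
    have h1 : dslope f a z = (f z - f a) / (z - a) := by
      rw [dslope_of_ne f hne, slope_def_field]
    rw [h1]
    refine le_max_of_le_right ?_
    rw [norm_div]
    have hC0 : 0 ≤ C := le_trans (norm_nonneg _) (hC 0 zero_mem_D)
    have h2 : ‖f z - f a‖ ≤ 2 * C := by
      calc ‖f z - f a‖ ≤ ‖f z‖ + ‖f a‖ :=
            norm_sub_le _ _
        _ ≤ C + C := add_le_add (hC z hz) (hC a ha)
        _ = 2 * C := by ring
    calc ‖f z - f a‖ / ‖z - a‖
        ≤ (2*C) / ‖z - a‖ := by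
          gcongr

      _ ≤ 2 * C / r := by
          rw [div_le_div_iff₀ (lt_of_lt_of_le hr0 hzar.le) hr0]
          nlinarith [hzar.le, hr0.le]

/-- Key structural lemma: every automorphism of `H^∞_0` is composition with a holomorphic
self-map `w` of the disc fixing the origin. -/
lemma key {T : (ℂ → ℂ) → (ℂ → ℂ)} (hT : IsAlgAutOn Hinf0 T) :
    ∃ w : ℂ → ℂ, w ∈ Hinf0 ∧ (∀ z ∈ D, ‖w z‖ < 1) ∧
      ∀ f ∈ Hinf0, ∀ z ∈ D, T f z = f (w z) := by
  obtain ⟨hmem, hcong, hadd, hsmul, hmul, hinj, hsurj⟩ := hT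
  set e : ℂ → ℂ := fun z => z with he
  have he_mem : e ∈ Hinf0 := e_mem
  set w : ℂ → ℂ := T e with hwdef
  have hw : w ∈ Hinf0 := hmem e he_mem
  have he2 : e * e ∈ Hinf0 := Hinf0_mul he_mem he_mem.1
  have hTe2 : Set.EqOn (T (e * e)) (w * w) D := hmul e he_mem e he_mem
  -- T of zero is zero on D
  have hT0 : ∀ z ∈ D, T 0 z = 0 := by
    intro z hz
    have h := hsmul 0 0 zero_mem hz
    simpa using h
  -- w is not identically zero on D
  have hwne : ¬ (∀ z ∈ D, w z = 0) := by
    intro h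
    have h1 : Set.EqOn (T e) (T 0) D := fun z hz => by
      rw [hT0 z hz]; exact h z hz
    have h2 : Set.EqOn e 0 D := hinj e he_mem 0 zero_mem h1
    have : (1/2 : ℂ) = 0 := h2 (by rw [mem_D_iff]; norm_num)
    norm_num at this
  -- helper : linearity
  have hlin : ∀ f ∈ Hinf0, ∀ g ∈ Hinf0, ∀ d : ℂ,
      Set.EqOn (T (f + d • g)) (T f + d • T g) D := by
    intro f hf g hg d z hz
    have h1 := hadd f hf (d • g) (Hinf0_smul d hg) hz
    have h2 := hsmul d g hg hz
    simp only [Pi.add_apply] at h1 ⊢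
    rw [h1, h2]
  -- |w| ≤ 1 on D
  have hle : ∀ z ∈ D, ‖w z‖ ≤ 1 := by
    intro z₀ hz₀
    by_contra hgt
    push_neg at hgt
    set a : ℂ := w z₀ with ha
    have ha0 : a ≠ 0 := by
      intro h; rw [h] at hgt; simp only [norm_zero] at hgt; linarith
    set u : ℂ → ℂ := fun z => z * (a - z)⁻¹ with hu
    have hau : ∀ z ∈ D, a - z ≠ 0 := by
      intro z hz
      have := mem_D_iff.1 hz
      intro h
      have : a = z := by linear_combination h
      rw [this] at hgt; linarith
    have hu_mem : u ∈ Hinf0 := by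
      refine ⟨⟨?_, (‖a‖ - 1)⁻¹, ?_⟩, by simp [hu]⟩
      · exact differentiableOn_id.mul
          (((differentiableOn_const a).sub differentiableOn_id).inv hau)
      · intro z hz
        have hz1 := mem_D_iff.1 hz
        have hab : ‖a‖ - 1 ≤ ‖a - z‖ := by
          have h1 : ‖a‖ - ‖z‖ ≤ ‖a - z‖ :=
            norm_sub_norm_le a z
          linarith
        rw [hu]
        simp only [norm_mul, norm_inv]
        calc ‖z‖ * (‖a - z‖)⁻¹
            ≤ 1 * (‖a‖ - 1)⁻¹ := by
              apply mul_le_mul hz1.le _ (by positivity) (by norm_num)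
              apply inv_anti₀ (by linarith) hab
          _ = (‖a‖ - 1)⁻¹ := one_mul _
    set q : ℂ → ℂ := e * e + (-a) • e with hq
    have hq_mem : q ∈ Hinf0 := Hinf0_add he2 (Hinf0_smul _ he_mem)
    have hqu : Set.EqOn (q * u) ((-1 : ℂ) • (e * e)) D := by
      intro z hz
      have h0 := hau z hz
      simp only [hq, hu, he, Pi.mul_apply, Pi.add_apply, Pi.smul_apply, smul_eq_mul]
      field_simp
      ring
    have h1 : Set.EqOn (T (q * u)) (T ((-1 : ℂ) • (e * e))) D :=
      hcong _ (Hinf0_mul hq_mem hu_mem.1) _ (Hinf0_smul _ he2) hqu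
    have h2 : Set.EqOn (T (q * u)) (T q * T u) D := hmul q hq_mem u hu_mem
    have h3 : Set.EqOn (T q) (T (e*e) + (-a) • T e) D := hlin _ he2 _ he_mem _
    have h4 : T q z₀ = 0 := by
      have h3' := h3 hz₀
      rw [h3']
      simp only [Pi.add_apply, Pi.smul_apply, smul_eq_mul]
      rw [hTe2 hz₀]
      show w z₀ * w z₀ + -a * (T e z₀) = 0
      have : T e z₀ = a := rfl
      rw [this]
      show a * a + -a * a = 0
      ring
    have h5 : T ((-1 : ℂ) • (e * e)) z₀ = -(a * a) := by
      rw [hsmul (-1 : ℂ) (e*e) he2 hz₀]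
      simp only [Pi.smul_apply, smul_eq_mul]
      rw [hTe2 hz₀]
      show -1 * (w z₀ * w z₀) = -(a*a)
      ring
    have h6 : -(a * a) = 0 := by
      rw [← h5, ← h1 hz₀, h2 hz₀]
      simp only [Pi.mul_apply, h4]
      ring
    have h7 : a * a = 0 := by linear_combination -h6
    exact ha0 (mul_self_eq_zero.1 h7)
  -- |w| < 1 on D
  have hwd : DifferentiableOn ℂ w D := hw.1.1
  have hlt : ∀ z ∈ D, ‖w z‖ < 1 := by
    intro z₁ hz₁
    rcases lt_or_eq_of_le (hle z₁ hz₁) with h | h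
    · exact h
    · exfalso
      have hmax : IsMaxOn (norm ∘ w) D z₁ := by
        intro z hz
        simp only [Function.comp_apply]
        rw [h]
        exact hle z hz
      have := Complex.eqOn_of_isPreconnected_of_isMaxOn_norm D_conn D_open hwd hz₁ hmax
      have h0 : w 0 = w z₁ := this zero_mem_D
      rw [hw.2] at h0
      rw [← h0] at h
      simp at h
  -- the composition formula at points where w ≠ 0
  have hformula_ne : ∀ f ∈ Hinf0, ∀ z₀ ∈ D, w z₀ ≠ 0 → T f z₀ = f (w z₀) := by
    intro f hf z₀ hz₀ hne
    set a : ℂ := w z₀ with ha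
    have haD : a ∈ D := mem_D_iff.2 (hlt z₀ hz₀)
    set c : ℂ := f a with hc
    set h : ℂ → ℂ := dslope f a with hh
    have hh_mem : h ∈ Hinf := dslope_mem_Hinf hf.1 haD
    set F₁ : ℂ → ℂ := e * e * f + (-c) • (e * e) with hF₁
    set F₂ : ℂ → ℂ := e * e + (-a) • e with hF₂
    set F₃ : ℂ → ℂ := e * h with hF₃
    have hF₁m : e * e * f ∈ Hinf0 := Hinf0_mul he2 hf.1
    have hF₁_mem : F₁ ∈ Hinf0 := Hinf0_add hF₁m (Hinf0_smul _ he2)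
    have hF₂_mem : F₂ ∈ Hinf0 := Hinf0_add he2 (Hinf0_smul _ he_mem)
    have hF₃_mem : F₃ ∈ Hinf0 := Hinf0_mul he_mem hh_mem
    have hid : Set.EqOn F₁ (F₂ * F₃) D := by
      intro z hz
      have hds := sub_smul_dslope f a z
      rw [smul_eq_mul] at hds
      simp only [hF₁, hF₂, hF₃, he, Pi.mul_apply, Pi.add_apply, Pi.smul_apply, smul_eq_mul]
      linear_combination (-(z * z)) * hds + (-(z * z)) * hc
    have h1 : Set.EqOn (T F₁) (T (F₂ * F₃)) D :=
      hcong _ hF₁_mem _ (Hinf0_mul hF₂_mem hF₃_mem.1) hid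
    have h2 : Set.EqOn (T (F₂ * F₃)) (T F₂ * T F₃) D := hmul _ hF₂_mem _ hF₃_mem
    have h3 : Set.EqOn (T F₁) (T (e*e*f) + (-c) • T (e*e)) D := hlin _ hF₁m _ he2 _
    have h4 : Set.EqOn (T F₂) (T (e*e) + (-a) • T e) D := hlin _ he2 _ he_mem _
    have h5 : Set.EqOn (T (e*e*f)) (T (e*e) * T f) D := hmul _ he2 _ hf
    have hTee : T (e*e) z₀ = a * a := by
      rw [hTe2 hz₀]; rfl
    have hTF₂ : T F₂ z₀ = 0 := by
      rw [h4 hz₀]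
      show T (e*e) z₀ + (-a) * (T e z₀) = 0
      rw [hTee]
      have : T e z₀ = a := rfl
      rw [this]
      ring
    have hmain : a * a * (T f z₀) + (-c) * (a * a) = 0 := by
      have e1 : T F₁ z₀ = T F₂ z₀ * T F₃ z₀ := by rw [h1 hz₀, h2 hz₀]; rfl
      rw [hTF₂, zero_mul] at e1
      have e2 : T F₁ z₀ = T (e*e*f) z₀ + (-c) * T (e*e) z₀ := by
        have := h3 hz₀
        simpa using this
      have e3 : T (e*e*f) z₀ = a * a * T f z₀ := by
        have := h5 hz₀
        simp only [Pi.mul_apply] at this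
        rw [this, hTee]
      rw [e2, e3, hTee] at e1
      linear_combination e1
    have haa : (a : ℂ) * a ≠ 0 := mul_ne_zero hne hne
    have : a * a * (T f z₀ - c) = 0 := by linear_combination hmain
    rcases mul_eq_zero.1 this with h' | h'
    · exact absurd h' haa
    · have : T f z₀ = c := by linear_combination h'
      rw [this, hc]
  refine ⟨w, hw, hlt, ?_⟩
  intro f hf z₀ hz₀
  by_cases hne : w z₀ ≠ 0
  · exact hformula_ne f hf z₀ hz₀ hne
  push_neg at hne
  have han : AnalyticOnNhd ℂ w D := hwd.analyticOnNhd D_open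
  rcases (han z₀ hz₀).eventually_eq_zero_or_eventually_ne_zero with hev | hev
  · exfalso
    have h0 := han.eqOn_zero_of_preconnected_of_eventuallyEq_zero D_conn hz₀ hev
    exact hwne fun z hz => h0 hz
  · have hD : ∀ᶠ z in 𝓝[≠] z₀, z ∈ D :=
      (D_open.eventually_mem hz₀).filter_mono nhdsWithin_le_nhds
    have heq : ∀ᶠ z in 𝓝[≠] z₀, T f z = f (w z) := by
      filter_upwards [hev, hD] with z h1 h2
      exact hformula_ne f hf z h2 h1
    have hc1 : ContinuousAt (T f) z₀ :=
      (hmem f hf).1.1.continuousOn.continuousAt (D_open.mem_nhds hz₀)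
    have hc2 : ContinuousAt (fun z => f (w z)) z₀ := by
      have hfc : ContinuousAt f (w z₀) :=
        hf.1.1.continuousOn.continuousAt (D_open.mem_nhds (mem_D_iff.2 (hlt z₀ hz₀)))
      exact hfc.comp (hwd.continuousOn.continuousAt (D_open.mem_nhds hz₀))
    have t1 : Filter.Tendsto (T f) (𝓝[≠] z₀) (𝓝 (T f z₀)) :=
      hc1.tendsto.mono_left nhdsWithin_le_nhds
    have t2 : Filter.Tendsto (fun z => f (w z)) (𝓝[≠] z₀) (𝓝 (f (w z₀))) :=
      hc2.tendsto.mono_left nhdsWithin_le_nhds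
    have t1' : Filter.Tendsto (fun z => f (w z)) (𝓝[≠] z₀) (𝓝 (T f z₀)) :=
      t1.congr' heq
    exact tendsto_nhds_unique t1' t2

lemma exists_inverse {T : (ℂ → ℂ) → (ℂ → ℂ)} (hT : IsAlgAutOn Hinf0 T) :
    ∃ S : (ℂ → ℂ) → (ℂ → ℂ), IsAlgAutOn Hinf0 S ∧
      (∀ f ∈ Hinf0, Set.EqOn (T (S f)) f D) ∧ (∀ f ∈ Hinf0, Set.EqOn (S (T f)) f D) := by
  classical
  obtain ⟨hmem, hcong, hadd, hsmul, hmul, hinj, hsurj⟩ := hT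
  choose F hF using hsurj
  set S : (ℂ → ℂ) → (ℂ → ℂ) := fun g => if hg : g ∈ Hinf0 then F g hg else 0 with hS
  have hSmem : ∀ g ∈ Hinf0, S g ∈ Hinf0 := by
    intro g hg; simp only [hS, dif_pos hg]; exact (hF g hg).1
  have hTS : ∀ g ∈ Hinf0, Set.EqOn (T (S g)) g D := by
    intro g hg; simp only [hS, dif_pos hg]; exact (hF g hg).2
  have hST : ∀ f ∈ Hinf0, Set.EqOn (S (T f)) f D := by
    intro f hf
    exact hinj _ (hSmem _ (hmem f hf)) f hf (hTS _ (hmem f hf))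
  refine ⟨S, ⟨hSmem, ?_, ?_, ?_, ?_, ?_, ?_⟩, hTS, hST⟩
  · intro g₁ hg₁ g₂ hg₂ hgeq
    refine hinj _ (hSmem _ hg₁) _ (hSmem _ hg₂) ?_
    intro z hz
    rw [hTS _ hg₁ hz, hTS _ hg₂ hz]
    exact hgeq hz
  · intro g₁ hg₁ g₂ hg₂
    refine hinj _ (hSmem _ (Hinf0_add hg₁ hg₂)) _
      (Hinf0_add (hSmem _ hg₁) (hSmem _ hg₂)) ?_
    intro z hz
    rw [hTS _ (Hinf0_add hg₁ hg₂) hz, hadd _ (hSmem _ hg₁) _ (hSmem _ hg₂) hz]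
    simp only [Pi.add_apply]
    rw [hTS _ hg₁ hz, hTS _ hg₂ hz]
  · intro c g hg
    refine hinj _ (hSmem _ (Hinf0_smul c hg)) _ (Hinf0_smul c (hSmem _ hg)) ?_
    intro z hz
    rw [hTS _ (Hinf0_smul c hg) hz, hsmul c _ (hSmem _ hg) hz]
    simp only [Pi.smul_apply, smul_eq_mul]
    rw [hTS _ hg hz]
  · intro g₁ hg₁ g₂ hg₂
    refine hinj _ (hSmem _ (Hinf0_mul hg₁ hg₂.1)) _
      (Hinf0_mul (hSmem _ hg₁) (hSmem _ hg₂).1) ?_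
    intro z hz
    rw [hTS _ (Hinf0_mul hg₁ hg₂.1) hz, hmul _ (hSmem _ hg₁) _ (hSmem _ hg₂) hz]
    simp only [Pi.mul_apply]
    rw [hTS _ hg₁ hz, hTS _ hg₂ hz]
  · intro g₁ hg₁ g₂ hg₂ hSeq
    intro z hz
    rw [← hTS _ hg₁ hz, ← hTS _ hg₂ hz]
    exact hcong _ (hSmem _ hg₁) _ (hSmem _ hg₂) hSeq hz
  · intro f hf
    exact ⟨T f, hmem f hf, hST f hf⟩

lemma exists_rotation {T : (ℂ → ℂ) → (ℂ → ℂ)} (hT : IsAlgAutOn Hinf0 T) :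
    ∃ lam : ℂ, ‖lam‖ = 1 ∧ ∀ f ∈ Hinf0, ∀ z ∈ D, T f z = f (lam * z) := by
  obtain ⟨S, hSaut, hTS, hST⟩ := exists_inverse hT
  obtain ⟨w, hw, hwlt, hwf⟩ := key hT
  obtain ⟨v, hv, hvlt, hvf⟩ := key hSaut
  set e : ℂ → ℂ := fun z => z with he
  have hvw : ∀ z ∈ D, v (w z) = z := by
    intro z hz
    have h1 : S e ∈ Hinf0 := hSaut.1 _ e_mem
    have h2 : T (S e) z = z := hTS _ e_mem hz
    have h3 : T (S e) z = S e (w z) := hwf _ h1 z hz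
    have h4 : S e (w z) = v (w z) := hvf _ e_mem (w z) (mem_D_iff.2 (hwlt z hz))
    rw [← h4, ← h3]; exact h2
  have hwv : ∀ z ∈ D, w (v z) = z := by
    intro z hz
    have h1 : T e ∈ Hinf0 := hT.1 _ e_mem
    have h2 : S (T e) z = z := hST _ e_mem hz
    have h3 : S (T e) z = T e (v z) := hvf _ h1 z hz
    have hvD : v z ∈ D := mem_D_iff.2 (hvlt z hz)
    have h4 : T e (v z) = w (v z) := hwf _ e_mem (v z) hvD
    rw [← h4, ← h3]; exact h2
  -- Schwarz lemma for w and v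
  have hwmaps : Set.MapsTo w (Metric.ball (0:ℂ) 1) (Metric.ball (0:ℂ) 1) := by
    intro z hz
    rw [mem_ball_zero_iff]
    exact hwlt z hz
  have hvmaps : Set.MapsTo v (Metric.ball (0:ℂ) 1) (Metric.ball (0:ℂ) 1) := by
    intro z hz
    rw [mem_ball_zero_iff]
    exact hvlt z hz
  have hSch : ∀ z ∈ D, ‖w z‖ ≤ ‖z‖ := by
    intro z hz
    exact Complex.norm_le_norm_of_mapsTo_ball hw.1.1 (hwmaps.mono_right ball_subset_closedBall) hw.2 (mem_D_iff.1 hz)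
  have hSchv : ∀ z ∈ D, ‖v z‖ ≤ ‖z‖ := by
    intro z hz
    exact Complex.norm_le_norm_of_mapsTo_ball hv.1.1 (hvmaps.mono_right ball_subset_closedBall) hv.2 (mem_D_iff.1 hz)
  have habs : ∀ z ∈ D, ‖w z‖ = ‖z‖ := by
    intro z hz
    refine le_antisymm (hSch z hz) ?_
    have h1 : ‖v (w z)‖ ≤ ‖w z‖ :=
      hSchv (w z) (mem_D_iff.2 (hwlt z hz))
    rw [hvw z hz] at h1
    exact h1
  -- rigidity : w z = lam * z
  set g : ℂ → ℂ := dslope w 0 with hg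
  have hg_diff : DifferentiableOn ℂ g D :=
    (Complex.differentiableOn_dslope (D_open.mem_nhds zero_mem_D)).2 hw.1.1
  have hzg : ∀ z : ℂ, w z = z * g z := by
    intro z
    have := sub_smul_dslope w 0 z
    rw [smul_eq_mul] at this
    simp only [sub_zero, hw.2] at this
    rw [← hg] at this
    linear_combination -this
  have habs_g : ∀ z ∈ D, z ≠ 0 → ‖g z‖ = 1 := by
    intro z hz hz0
    have h1 := habs z hz
    rw [hzg z, norm_mul] at h1
    have h2 : ‖z‖ ≠ 0 := by
      simpa using hz0
    field_simp at h1
    exact h1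
  have habs_g0 : ‖g 0‖ = 1 := by
    have hc : ContinuousAt g 0 :=
      hg_diff.continuousOn.continuousAt (D_open.mem_nhds zero_mem_D)
    have t1 : Filter.Tendsto (fun z => ‖g z‖) (𝓝[≠] (0:ℂ))
        (𝓝 (‖g 0‖)) :=
      (continuous_norm.continuousAt.comp hc).tendsto.mono_left nhdsWithin_le_nhds
    have hev : ∀ᶠ z in 𝓝[≠] (0:ℂ), ‖g z‖ = 1 := by
      have hD : ∀ᶠ z in 𝓝[≠] (0:ℂ), z ∈ D :=
        (D_open.eventually_mem zero_mem_D).filter_mono nhdsWithin_le_nhds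
      have hne : ∀ᶠ z in 𝓝[≠] (0:ℂ), z ≠ 0 := eventually_mem_nhdsWithin
      filter_upwards [hD, hne] with z h1 h2
      exact habs_g z h1 h2
    have t2 : Filter.Tendsto (fun _ : ℂ => (1:ℝ)) (𝓝[≠] (0:ℂ)) (𝓝 (‖g 0‖)) :=
      t1.congr' (by filter_upwards [hev] with z h; rw [h])
    exact tendsto_nhds_unique t2 tendsto_const_nhds
  have hgle : ∀ z ∈ D, ‖g z‖ ≤ 1 := by
    intro z hz
    rcases eq_or_ne z 0 with rfl | hz0
    · exact habs_g0.le
    · exact (habs_g z hz hz0).le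
  have hmax : IsMaxOn (norm ∘ g) D 0 := by
    intro z hz
    simp only [Function.comp_apply, habs_g0]
    exact hgle z hz
  have hconst := Complex.eqOn_of_isPreconnected_of_isMaxOn_norm D_conn D_open hg_diff
    zero_mem_D hmax
  refine ⟨g 0, habs_g0, ?_⟩
  intro f hf z hz
  rw [hwf f hf z hz, hzg z, hconst hz]
  simp only [Function.const_apply]
  ring_nf

end AuxiliaryLemmas

/-- Automorphisms of `H^∞_0(𝔻)` preserve inner functions. -/
theorem automorphism_of_Hinf0_preserves_inner (T : (ℂ → ℂ) → (ℂ → ℂ))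
    (hT : IsAlgAutOn Hinf0 T) (φ : ℂ → ℂ) (hφ : φ ∈ Hinf0) (hinner : IsInner φ) :
    IsInner (T φ) := by
  obtain ⟨lam, hlam, hfor⟩ := exists_rotation hT
  refine ⟨(hT.1 φ hφ).1, ?_⟩
  set α : ℝ := lam.arg with hα
  have hexp : Complex.exp ((α:ℂ) * Complex.I) = lam := by
    have h := Complex.norm_mul_exp_arg_mul_I lam
    rw [hlam] at h
    simpa using h
  have h2 := (measurePreserving_add_right (volume : Measure ℝ) α).quasiMeasurePreserving.ae
    (p := fun θ : ℝ => Filter.Tendsto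
      (fun r : ℝ => ‖φ ((r : ℂ) * Complex.exp ((θ : ℂ) * Complex.I))‖)
      (nhdsWithin 1 (Set.Iio 1)) (nhds 1)) hinner.2
  filter_upwards [h2] with θ hθ
  refine hθ.congr' ?_
  have hIoo : Set.Ioo (0:ℝ) 1 ∈ nhdsWithin (1:ℝ) (Set.Iio 1) :=
    Ioo_mem_nhdsLT_of_mem (by constructor <;> norm_num)
  filter_upwards [hIoo] with r hr
  have habs : ‖(r:ℂ) * Complex.exp ((θ:ℂ) * Complex.I)‖ = r := by
    rw [norm_mul, Complex.norm_exp_ofReal_mul_I]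
    simp [Complex.norm_real, abs_of_pos hr.1]
  have hz : ((r:ℂ) * Complex.exp ((θ:ℂ) * Complex.I)) ∈ D := by
    rw [mem_D_iff, habs]; exact hr.2
  rw [hfor φ hφ _ hz]
  congr 2
  push_cast
  rw [add_mul, Complex.exp_add, ← hexp]
  ring
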